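/- Let μ be a multiplication on A, with symmetric part ρ(x,y) = μ(x,y) + μ(y,x) and skew-symmetric part ψ(x,y) = μ(x,y) − μ(y,x). Then μ is weakly associative, i.e. A_μ(x,y,z) + A_μ(y,z,x) − A_μ(y,x,z) = 0 for all x,y,z ∈ A, if and only if ψ satisfies the Jacobi identity and the Leibniz identity ψ(x,ρ(y,z)) = ρ(y,ψ(x,z)) + ρ(z,ψ(x,y)) holds for all x,y,z ∈ A; that is, iff (A,ρ,ψ) is a nonassociative Poisson algebra. -/

import Mathlib

/-!
Write `W(x,y,z) = A_μ(x,y,z) + A_μ(y,z,x) - A_μ(y,x,z)`. Expanding in terms of `μ`, the Jacobiator of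
`ψ` is `W(x,y,z) - W(x,z,y)` and the Leibniz defect of `(ρ, ψ)` is `W(x,y,z) + W(x,z,y)`.
Hence `W = 0` gives both identities, and conversely both identities give `2 W = 0`, so `W = 0`
as soon as `2` is invertible.
-/

/-- The associator of a bilinear multiplication. -/
def assocMap {K A : Type*} [Field K] [AddCommGroup A] [Module K A]
    (μ : A →ₗ[K] A →ₗ[K] A) (x y z : A) : A :=
  μ x (μ y z) - μ (μ x y) z

/-- The symmetric part of a bilinear multiplication. -/
def symPart {K A : Type*} [Field K] [AddCommGroup A] [Module K A]
    (μ : A →ₗ[K] A →ₗ[K] A) (x y : A) : A :=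
  μ x y + μ y x

/-- The skew-symmetric part of a bilinear multiplication. -/
def skewPart {K A : Type*} [Field K] [AddCommGroup A] [Module K A]
    (μ : A →ₗ[K] A →ₗ[K] A) (x y : A) : A :=
  μ x y - μ y x

section

variable {K A : Type*} [Field K] [AddCommGroup A] [Module K A] (μ : A →ₗ[K] A →ₗ[K] A)

def weakAssocMap (x y z : A) : A :=
  assocMap μ x y z + assocMap μ y z x - assocMap μ y x z

def skewJacobiator (x y z : A) : A :=
  skewPart μ x (skewPart μ y z) + skewPart μ y (skewPart μ z x) + skewPart μ z (skewPart μ x y)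

def leibnizDefect (x y z : A) : A :=
  skewPart μ x (symPart μ y z) - symPart μ y (skewPart μ x z) - symPart μ z (skewPart μ x y)

theorem skewJacobiator_eq_weakAssocMap_sub (x y z : A) :
    skewJacobiator μ x y z = weakAssocMap μ x y z - weakAssocMap μ x z y := by
  simp only [skewJacobiator, weakAssocMap, assocMap, skewPart, map_sub, LinearMap.sub_apply]
  abel

theorem leibnizDefect_eq_weakAssocMap_add (x y z : A) :
    leibnizDefect μ x y z = weakAssocMap μ x y z + weakAssocMap μ x z y := by
  simp only [leibnizDefect, weakAssocMap, assocMap, skewPart, symPart, map_add, map_sub,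
    LinearMap.add_apply, LinearMap.sub_apply]
  abel

theorem two_smul_weakAssocMap (x y z : A) :
    (2 : K) • weakAssocMap μ x y z = skewJacobiator μ x y z + leibnizDefect μ x y z := by
  rw [skewJacobiator_eq_weakAssocMap_sub, leibnizDefect_eq_weakAssocMap_add, two_smul]
  abel

theorem weakAssocMap_eq_zero_iff [NeZero (2 : K)] :
    (∀ x y z : A, weakAssocMap μ x y z = 0) ↔
      (∀ x y z : A, skewJacobiator μ x y z = 0) ∧ ∀ x y z : A, leibnizDefect μ x y z = 0 := by
  constructor
  · intro h
    refine ⟨fun x y z => ?_, fun x y z => ?_⟩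
    · rw [skewJacobiator_eq_weakAssocMap_sub, h, h, sub_zero]
    · rw [leibnizDefect_eq_weakAssocMap_add, h, h, add_zero]
  · rintro ⟨hJacobi, hLeibniz⟩ x y z
    have h2 : (2 : K) • weakAssocMap μ x y z = 0 := by
      rw [two_smul_weakAssocMap, hJacobi, hLeibniz, add_zero]
    exact (smul_eq_zero.mp h2).resolve_left two_ne_zero

end

/-- A multiplication `μ` is weakly associative iff its skew-symmetric part `ψ`
satisfies the Jacobi identity and the Leibniz identity
`ψ(x,ρ(y,z)) = ρ(y,ψ(x,z)) + ρ(z,ψ(x,y))` with its symmetric part `ρ`,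
i.e. iff `(A, ρ, ψ)` is a nonassociative Poisson algebra. -/
theorem weakly_associative_iff_nonassoc_poisson {K A : Type*} [Field K] [CharZero K]
    [AddCommGroup A] [Module K A]
    (μ : A →ₗ[K] A →ₗ[K] A) :
    (∀ x y z : A, assocMap μ x y z + assocMap μ y z x - assocMap μ y x z = 0) ↔
    ((∀ x y z : A,
        skewPart μ x (skewPart μ y z) + skewPart μ y (skewPart μ z x) +
          skewPart μ z (skewPart μ x y) = 0) ∧
     (∀ x y z : A,
        skewPart μ x (symPart μ y z) =
          symPart μ y (skewPart μ x z) + symPart μ z (skewPart μ x y))) := by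
  simpa only [weakAssocMap, skewJacobiator, leibnizDefect, sub_sub, sub_eq_zero] using
    weakAssocMap_eq_zero_iff μ
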